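/- arXiv:2303.01719 — 2 statements merged into one kernel-verified Lean document; each statement's English description precedes it below -/
import Mathlib

section
/- The (P,π,w)-weight ω̄_{w,(P,π)} is a weight on V = ⊕_{i=1}^s F_q^{k_i}; that is, it is nonnegative and vanishes only at 0, is symmetric under negation, and satisfies ω̄(u+v) ≤ ω̄(u) + ω̄(v). Consequently d_{w,(P,π)}(u,v) := ω̄_{w,(P,π)}(u-v) is a metric on V. -/
attribute [local instance] Classical.propDecidable

noncomputable section

variable {ι F : Type*}

section Defs
variable [Fintype ι] [PartialOrder ι] [Field F] [Fintype F] {k : ι → ℕ}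

/-- block support -/
def suppB (u : ∀ i, Fin (k i) → F) : Finset ι :=
  Finset.univ.filter fun i => u i ≠ 0

/-- order ideal generated by the block support -/
def idealOf (u : ∀ i, Fin (k i) → F) : Finset ι :=
  Finset.univ.filter fun i => ∃ j ∈ suppB u, i ≤ j

/-- maximal elements of the ideal generated by the support -/
def maxOf (u : ∀ i, Fin (k i) → F) : Finset ι :=
  (idealOf u).filter fun i => ∀ j ∈ idealOf u, i ≤ j → i = j

/-- maximal weight of a block -/
def Wblk (w : F → ℕ) (u : ∀ i, Fin (k i) → F) (i : ι) : ℕ :=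
  Finset.univ.sup fun j => w (u i j)

/-- maximal value of the weight -/
def Mw (w : F → ℕ) : ℕ := Finset.univ.sup w

/-- minimal value of the weight on nonzero elements -/
def mw (w : F → ℕ) : ℕ := sInf (w '' {a | a ≠ 0})

/-- the weighted poset block weight -/
def omegaW (w : F → ℕ) (u : ∀ i, Fin (k i) → F) : ℕ :=
  (∑ i ∈ maxOf u, Wblk w u i) + (idealOf u \ maxOf u).card * Mw w

/-- principal ideal generated by `i` -/
def pIdeal (i : ι) : Finset ι := Finset.univ.filter fun j => j ≤ i

end Defs

/-!
Write `ω̄(u) = ∑ᵢ cᵢ(u)` with `cᵢ = omegaSummand`: block `i` contributes `Wᵢ(u)` if it is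
maximal in the ideal `I_u`, `M_w` if it lies in `I_u` below some other element, and `0` outside
`I_u`. Since `Wᵢ(u) ≤ M_w` and `Wᵢ(u) = 0` off the support, `Wᵢ(u) ≤ cᵢ(u) ≤ ω̄(u)` for every
block, which gives definiteness. The triangle inequality holds block by block: a maximal block
of `I_{u+v}` contributes `Wᵢ(u+v) ≤ Wᵢ(u) + Wᵢ(v)`, and a non-maximal one lies strictly below a
support block of `u` or of `v`, hence is non-maximal in `I_u` or `I_v` and already contributes
`M_w` there.
-/

section WeightedPosetWeight

variable {k : ι → ℕ} {w : F → ℕ} {u v : ∀ i, Fin (k i) → F} {i : ι}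

lemma le_Wblk (w : F → ℕ) (u : ∀ i, Fin (k i) → F) (i : ι) (j : Fin (k i)) :
    w (u i j) ≤ Wblk w u i :=
  Finset.le_sup (f := fun j => w (u i j)) (Finset.mem_univ j)

lemma Wblk_le_Mw [Fintype F] (w : F → ℕ) (u : ∀ i, Fin (k i) → F) (i : ι) :
    Wblk w u i ≤ Mw w :=
  Finset.sup_le fun j _ => Finset.le_sup (f := w) (Finset.mem_univ (u i j))

lemma Wblk_eq_zero_of_eq_zero [Zero F] (hw0 : w 0 = 0) (hu : u i = 0) : Wblk w u i = 0 :=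
  Nat.eq_zero_of_le_zero <| Finset.sup_le fun j _ => by simp [hu, hw0]

lemma Wblk_neg [Neg F] (hwneg : ∀ a : F, w (-a) = w a) (u : ∀ i, Fin (k i) → F) (i : ι) :
    Wblk w (-u) i = Wblk w u i :=
  Finset.sup_congr rfl fun j _ => hwneg (u i j)

lemma Wblk_add_le [Add F] (hwadd : ∀ a b : F, w (a + b) ≤ w a + w b)
    (u v : ∀ i, Fin (k i) → F) (i : ι) :
    Wblk w (u + v) i ≤ Wblk w u i + Wblk w v i :=
  Finset.sup_le fun j _ =>
    (hwadd (u i j) (v i j)).trans (add_le_add (le_Wblk w u i j) (le_Wblk w v i j))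

section Support
variable [Fintype ι] [Field F]

lemma mem_suppB : i ∈ suppB u ↔ u i ≠ 0 := by
  simp [suppB]

lemma suppB_neg (u : ∀ i, Fin (k i) → F) : suppB (-u) = suppB u := by
  ext i
  simp [mem_suppB]

end Support

section Ideal
variable [Fintype ι] [PartialOrder ι] [Field F]

lemma mem_idealOf : i ∈ idealOf u ↔ ∃ j, u j ≠ 0 ∧ i ≤ j := by
  simp [idealOf, mem_suppB]

lemma maxOf_subset_idealOf (u : ∀ i, Fin (k i) → F) : maxOf u ⊆ idealOf u :=
  Finset.filter_subset _ _

lemma mem_idealOf_sdiff_maxOf : i ∈ idealOf u \ maxOf u ↔ ∃ j, u j ≠ 0 ∧ i < j := by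
  constructor
  · intro hi
    obtain ⟨hideal, hnotmax⟩ := Finset.mem_sdiff.mp hi
    obtain ⟨j, hj, hij, hne⟩ : ∃ j ∈ idealOf u, i ≤ j ∧ i ≠ j := by
      simpa [maxOf, hideal] using hnotmax
    obtain ⟨m, hm, hjm⟩ := mem_idealOf.mp hj
    exact ⟨m, hm, lt_of_lt_of_le (lt_of_le_of_ne hij hne) hjm⟩
  · rintro ⟨j, hj, hij⟩
    have hjideal : j ∈ idealOf u := mem_idealOf.mpr ⟨j, hj, le_rfl⟩
    refine Finset.mem_sdiff.mpr ⟨mem_idealOf.mpr ⟨j, hj, hij.le⟩, fun hmax => hij.ne ?_⟩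
    exact (Finset.mem_filter.mp hmax).2 j hjideal hij.le

lemma idealOf_neg (u : ∀ i, Fin (k i) → F) : idealOf (-u) = idealOf u := by
  rw [idealOf, idealOf, suppB_neg]

lemma maxOf_neg (u : ∀ i, Fin (k i) → F) : maxOf (-u) = maxOf u := by
  rw [maxOf, maxOf, idealOf_neg]

end Ideal

section Weight
variable [Fintype ι] [PartialOrder ι] [Field F] [Fintype F]

def omegaSummand (w : F → ℕ) (u : ∀ i, Fin (k i) → F) (i : ι) : ℕ :=
  if i ∈ maxOf u then Wblk w u i else if i ∈ idealOf u then Mw w else 0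

lemma omegaSummand_of_mem_maxOf (hi : i ∈ maxOf u) : omegaSummand w u i = Wblk w u i :=
  if_pos hi

lemma omegaSummand_of_mem_sdiff (hi : i ∈ idealOf u \ maxOf u) : omegaSummand w u i = Mw w := by
  obtain ⟨hideal, hnotmax⟩ := Finset.mem_sdiff.mp hi
  simp [omegaSummand, hideal, hnotmax]

lemma omegaSummand_of_not_mem_idealOf (hi : i ∉ idealOf u) : omegaSummand w u i = 0 := by
  have hnotmax : i ∉ maxOf u := fun h => hi (maxOf_subset_idealOf u h)
  simp [omegaSummand, hi, hnotmax]

lemma omegaW_eq_sum_omegaSummand (w : F → ℕ) (u : ∀ i, Fin (k i) → F) :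
    omegaW w u = ∑ i, omegaSummand w u i := by
  rw [← Finset.sum_subset (Finset.subset_univ (idealOf u))
      fun i _ hi => omegaSummand_of_not_mem_idealOf hi,
    ← Finset.sum_sdiff (maxOf_subset_idealOf u), omegaW, add_comm,
    Finset.sum_congr rfl fun i hi => omegaSummand_of_mem_sdiff hi,
    Finset.sum_congr rfl fun i hi => omegaSummand_of_mem_maxOf hi,
    Finset.sum_const, smul_eq_mul]

lemma Wblk_le_omegaSummand (hw0 : w 0 = 0) (u : ∀ i, Fin (k i) → F) (i : ι) :
    Wblk w u i ≤ omegaSummand w u i := by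
  by_cases hmax : i ∈ maxOf u
  · exact (omegaSummand_of_mem_maxOf hmax).ge
  by_cases hideal : i ∈ idealOf u
  · rw [omegaSummand_of_mem_sdiff (Finset.mem_sdiff.mpr ⟨hideal, hmax⟩)]
    exact Wblk_le_Mw w u i
  · have hu : u i = 0 := by
      by_contra hne
      exact hideal (mem_idealOf.mpr ⟨i, hne, le_rfl⟩)
    rw [Wblk_eq_zero_of_eq_zero hw0 hu]
    exact Nat.zero_le _

lemma Wblk_le_omegaW (hw0 : w 0 = 0) (u : ∀ i, Fin (k i) → F) (i : ι) :
    Wblk w u i ≤ omegaW w u := by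
  rw [omegaW_eq_sum_omegaSummand]
  exact (Wblk_le_omegaSummand hw0 u i).trans
    (Finset.single_le_sum (fun _ _ => Nat.zero_le _) (Finset.mem_univ i))

lemma omegaSummand_add_le (hw0 : w 0 = 0) (hwadd : ∀ a b : F, w (a + b) ≤ w a + w b)
    (u v : ∀ i, Fin (k i) → F) (i : ι) :
    omegaSummand w (u + v) i ≤ omegaSummand w u i + omegaSummand w v i := by
  by_cases hmax : i ∈ maxOf (u + v)
  · rw [omegaSummand_of_mem_maxOf hmax]
    exact (Wblk_add_le hwadd u v i).trans
      (add_le_add (Wblk_le_omegaSummand hw0 u i) (Wblk_le_omegaSummand hw0 v i))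
  by_cases hideal : i ∈ idealOf (u + v)
  · have hsdiff := Finset.mem_sdiff.mpr ⟨hideal, hmax⟩
    rw [omegaSummand_of_mem_sdiff hsdiff]
    obtain ⟨j, hj, hij⟩ := mem_idealOf_sdiff_maxOf.mp hsdiff
    have huv : u j ≠ 0 ∨ v j ≠ 0 := by
      by_contra! h
      exact hj (by rw [Pi.add_apply, h.1, h.2, add_zero])
    rcases huv with hu | hv
    · rw [omegaSummand_of_mem_sdiff (mem_idealOf_sdiff_maxOf.mpr ⟨j, hu, hij⟩)]
      exact Nat.le_add_right _ _
    · rw [omegaSummand_of_mem_sdiff (mem_idealOf_sdiff_maxOf.mpr ⟨j, hv, hij⟩)]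
      exact Nat.le_add_left _ _
  · rw [omegaSummand_of_not_mem_idealOf hideal]
    exact Nat.zero_le _

theorem omegaW_add_le (hw0 : w 0 = 0) (hwadd : ∀ a b : F, w (a + b) ≤ w a + w b)
    (u v : ∀ i, Fin (k i) → F) : omegaW w (u + v) ≤ omegaW w u + omegaW w v := by
  simp only [omegaW_eq_sum_omegaSummand, ← Finset.sum_add_distrib]
  exact Finset.sum_le_sum fun i _ => omegaSummand_add_le hw0 hwadd u v i

theorem omegaW_neg (hwneg : ∀ a : F, w (-a) = w a) (u : ∀ i, Fin (k i) → F) :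
    omegaW w (-u) = omegaW w u := by
  simp only [omegaW, idealOf_neg, maxOf_neg, Wblk_neg hwneg]

theorem omegaW_eq_zero_iff (hw0 : ∀ a : F, w a = 0 ↔ a = 0) (u : ∀ i, Fin (k i) → F) :
    omegaW w u = 0 ↔ u = 0 := by
  constructor
  · intro hu
    funext i j
    have hle : w (u i j) ≤ 0 :=
      hu ▸ (le_Wblk w u i j).trans (Wblk_le_omegaW ((hw0 0).mpr rfl) u i)
    exact (hw0 _).mp (Nat.le_zero.mp hle)
  · rintro rfl
    rw [omegaW_eq_sum_omegaSummand]
    refine Finset.sum_eq_zero fun i _ => omegaSummand_of_not_mem_idealOf ?_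
    simp [mem_idealOf]

end Weight

end WeightedPosetWeight

/-- The `(P,π,w)`-weight is a weight on `V`, and the induced distance is a metric. -/
theorem stmt1 [Fintype ι] [PartialOrder ι] [Field F] [Fintype F] {k : ι → ℕ}
    (w : F → ℕ)
    (hw0 : ∀ a : F, w a = 0 ↔ a = 0)
    (hwneg : ∀ a : F, w (-a) = w a)
    (hwadd : ∀ a b : F, w (a + b) ≤ w a + w b) :
    (∀ u : ∀ i, Fin (k i) → F, omegaW w u = 0 ↔ u = 0) ∧
    (∀ u : ∀ i, Fin (k i) → F, omegaW w (-u) = omegaW w u) ∧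
    (∀ u v : ∀ i, Fin (k i) → F, omegaW w (u + v) ≤ omegaW w u + omegaW w v) ∧
    (∀ u v : ∀ i, Fin (k i) → F, omegaW w (u - v) = 0 ↔ u = v) ∧
    (∀ u v : ∀ i, Fin (k i) → F, omegaW w (u - v) = omegaW w (v - u)) ∧
    (∀ u v x : ∀ i, Fin (k i) → F,
      omegaW w (u - v) ≤ omegaW w (u - x) + omegaW w (x - v)) := by
  have hadd := omegaW_add_le ((hw0 0).mpr rfl) hwadd (k := k)
  refine ⟨omegaW_eq_zero_iff hw0, omegaW_neg hwneg, hadd, ?_, ?_, ?_⟩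
  · intro u v
    rw [omegaW_eq_zero_iff hw0, sub_eq_zero]
  · intro u v
    rw [← neg_sub v u, omegaW_neg hwneg]
  · intro u v x
    simpa only [sub_add_sub_cancel] using hadd (u - x) (x - v)
end
end

section
/- For vectors u, v in V, the set difference I_{u+v}^P \ M_{u+v}^P is contained in (I_u^P \ M_u^P) ∪ (I_v^P \ M_v^P). -/
attribute [local instance] Classical.propDecidable

noncomputable section

variable {ι F : Type*}

/-- `I_{u+v}^P \\ M_{u+v}^P ⊆ (I_u^P \\ M_u^P) ∪ (I_v^P \\ M_v^P)`. -/
theorem stmt2 [Fintype ι] [PartialOrder ι] [Field F] [Fintype F] {k : ι → ℕ}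
    [DecidableEq ι]
    (u v : ∀ i, Fin (k i) → F) :
    idealOf (u + v) \ maxOf (u + v) ⊆
      (idealOf u \ maxOf u) ∪ (idealOf v \ maxOf v) := by
  intro i hi
  simp only [Finset.mem_sdiff, maxOf, Finset.mem_filter, idealOf, suppB,
    Finset.mem_union, Finset.mem_univ, true_and, not_and, not_forall] at hi ⊢
  obtain ⟨hideal, hnotmax⟩ := hi
  obtain ⟨j', hj', hij', hne⟩ := hnotmax hideal
  obtain ⟨j'', hj''ne, hj'j''⟩ := hj'
  have hij'' : i ≤ j'' := le_trans hij' hj'j''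
  have hne'' : i ≠ j'' := fun h => hne (le_antisymm hij' (h ▸ hj'j''))
  have : u j'' ≠ 0 ∨ v j'' ≠ 0 := by
    by_contra h
    push_neg at h
    exact hj''ne (by simp [Pi.add_apply, h.1, h.2])
  rcases this with h | h
  · left
    exact ⟨⟨j'', h, hij''⟩, fun _ => ⟨j'', ⟨j'', h, le_refl _⟩, hij'', hne''⟩⟩
  · right
    exact ⟨⟨j'', h, hij''⟩, fun _ => ⟨j'', ⟨j'', h, le_refl _⟩, hij'', hne''⟩⟩
end
end
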